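/- Splitting lemma: if x₁ is a string with α(x₁) = β(x₁)+2, every proper prefix u of x₁ satisfies α(u) ≤ β(u)+1, and every suffix w of x₁ satisfies α(w) ≥ β(w), then writing x₁ = y z where y is the shortest prefix with α(y) = β(y)+1, both y and z are almost even. -/
import Mathlib


inductive Letter : Type
  | a | b
deriving DecidableEq

open Letter

def alpha (x : List Letter) : ℕ := x.count Letter.a
def beta (x : List Letter) : ℕ := x.count Letter.b

/-- x is "almost even": nonempty, α(x) = β(x)+1, and every proper prefix u has α(u) ≤ β(u). -/
def AE (x : List Letter) : Prop :=
  x ≠ [] ∧ alpha x = beta x + 1 ∧ ∀ u : List Letter, u <+: x → u ≠ x → alpha u ≤ beta u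

theorem stmt15 (x₁ : List Letter) (hne : x₁ ≠ []) (hab : alpha x₁ = beta x₁ + 2)
    (hpre : ∀ u : List Letter, u <+: x₁ → u ≠ x₁ → alpha u ≤ beta u + 1)
    (hsuf : ∀ w : List Letter, w <:+ x₁ → alpha w ≥ beta w)
    (y z : List Letter) (hyz : x₁ = y ++ z)
    (hy : alpha y = beta y + 1)
    (hshort : ∀ y' : List Letter, y' <+: x₁ → alpha y' = beta y' + 1 → y.length ≤ y'.length) :
    AE y ∧ AE z := by
  have hypre : y <+: x₁ := hyz ▸ List.prefix_append y z
  have hya : alpha x₁ = alpha y + alpha z := by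
    simp [hyz, alpha, List.count_append]
  have hyb : beta x₁ = beta y + beta z := by
    simp [hyz, beta, List.count_append]
  have hz : alpha z = beta z + 1 := by omega
  have hzne : z ≠ [] := by
    intro h; simp [h, alpha, beta] at hz
  have hyne : y ≠ [] := by
    intro h; simp [h, alpha, beta] at hy
  refine ⟨⟨hyne, hy, ?_⟩, ⟨hzne, hz, ?_⟩⟩
  · intro u hu hune
    have hux : u <+: x₁ := hu.trans hypre
    have hlt : u.length < y.length := by
      have := hu.length_le
      rcases lt_or_eq_of_le this with h' | h'
      · exact h'
      · exact absurd (hu.eq_of_length h') hune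
    have hunx : u ≠ x₁ := by
      intro h
      have := hux.length_le
      rw [h] at hlt
      have := hypre.length_le
      omega
    have h1 := hpre u hux hunx
    have h2 : alpha u ≠ beta u + 1 := by
      intro h
      have := hshort u hux h
      omega
    omega
  · intro u hu hune
    have hux : y ++ u <+: x₁ := by
      rw [hyz]; exact (List.prefix_append_right_inj y).mpr hu
    have hunx : y ++ u ≠ x₁ := by
      rw [hyz]; intro h
      exact hune (List.append_cancel_left h)
    have h1 := hpre (y ++ u) hux hunx
    have ha : alpha (y ++ u) = alpha y + alpha u := by
      simp [alpha, List.count_append]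
    have hb : beta (y ++ u) = beta y + beta u := by
      simp [beta, List.count_append]
    omega
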